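/- arXiv:2503.23343 — 2 statements merged into one kernel-verified Lean document; each statement's English description precedes it below -/
import Mathlib

section
/- Let R : E → F and S : F → G be relation morphisms in PRG (multiplicative, decomposable, proper, vertex disjoint, target injective) that are moreover target surjective. Then S ∘ R is target surjective. -/
/-! Basic theory of directed graphs, finite paths, and relation morphisms
(following "Relation morphisms of directed graphs"). -/

structure DGraph where
  V : Type
  E : Type
  s : E → V
  t : E → V

namespace DGraph

/-- `G.chain u l w` : the list of edges `l` forms a path from `u` to `w`. -/
def chain (G : DGraph) : G.V → List G.E → G.V → Prop
  | v, [], w => v = w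
  | v, e :: es, w => G.s e = v ∧ G.chain (G.t e) es w

theorem chain_append {G : DGraph} :
    ∀ {l1 : List G.E} {u v w : G.V} {l2 : List G.E},
      G.chain u l1 v → G.chain v l2 w → G.chain u (l1 ++ l2) w
  | [], _, _, _, _, h1, h2 => by cases h1; exact h2
  | e :: es, _, _, _, _, h1, h2 => ⟨h1.1, chain_append h1.2 h2⟩

/-- A vertex is regular if it emits at least one and only finitely many edges. -/
def IsRegularV (G : DGraph) (v : G.V) : Prop :=
  (∃ e, G.s e = v) ∧ {e | G.s e = v}.Finite

end DGraph

/-- A finite path in a directed graph (a vertex when `edges = []`). -/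
structure FPath (G : DGraph) where
  src : G.V
  tgt : G.V
  edges : List G.E
  chain : G.chain src edges tgt

namespace FPath

variable {G : DGraph}

/-- A vertex viewed as a length-zero path. -/
def ofVertex (v : G.V) : FPath G := ⟨v, v, [], rfl⟩

/-- An edge viewed as a length-one path. -/
def ofEdge (e : G.E) : FPath G := ⟨G.s e, G.t e, [e], ⟨rfl, rfl⟩⟩

/-- Concatenation of composable paths. -/
def comp (x y : FPath G) (h : x.tgt = y.src) : FPath G where
  src := x.src
  tgt := y.tgt
  edges := x.edges ++ y.edges
  chain := DGraph.chain_append x.chain (by rw [h]; exact y.chain)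

/-- `x.le y` : `x` is an initial subpath of `y`. -/
def le (x y : FPath G) : Prop := x.src = y.src ∧ x.edges <+: y.edges

/-- Two paths are comparable if one is an initial subpath of the other. -/
def comparable (x y : FPath G) : Prop := x.le y ∨ y.le x

/-- A path of length zero. -/
def IsVertex (x : FPath G) : Prop := x.edges = []

end FPath

/-- `IsConcat xs x` : the (nonempty) list of paths `xs` concatenates to `x`. -/
inductive IsConcat {G : DGraph} : List (FPath G) → FPath G → Prop
  | single (x : FPath G) : IsConcat [x] x
  | cons (x : FPath G) {xs : List (FPath G)} {y : FPath G} (h : x.tgt = y.src) :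
      IsConcat xs y → IsConcat (x :: xs) (x.comp y h)

/-- A relation between the finite paths of two graphs. -/
abbrev GraphRel (E F : DGraph) := Set (FPath E × FPath F)

/-- Composition of relations (`RelComp R S` is `S ∘ R` in the usual notation). -/
def RelComp {A B C : Type*} (R : Set (A × B)) (S : Set (B × C)) : Set (A × C) :=
  {p | ∃ b, (p.1, b) ∈ R ∧ (b, p.2) ∈ S}

/-- The relation `R_f = {(x, f x)}` associated to a map. -/
def relOfFun {A B : Type*} (f : A → B) : Set (A × B) := {p | p.2 = f p.1}

/-- The relation `R^g = {(g y, y)}` associated to a map in the opposite direction. -/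
def relOfCofun {A B : Type*} (g : B → A) : Set (A × B) := {p | p.1 = g p.2}

/-- A relation is transitively closed if `(x,y), (x,y'), (x',y') ∈ R` implies `(x',y) ∈ R`. -/
def TransClosed {X Y : Type*} (R : Set (X × Y)) : Prop :=
  ∀ x x' y y', (x, y) ∈ R → (x, y') ∈ R → (x', y') ∈ R → (x', y) ∈ R

/-- A relation morphism of graphs: preimages of vertices are vertices, and
sources and targets are preserved. -/
structure IsRelMorphism (E F : DGraph) (R : GraphRel E F) : Prop where
  vertex : ∀ x y, (x, y) ∈ R → y.IsVertex → x.IsVertex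
  src : ∀ x y, (x, y) ∈ R → (FPath.ofVertex x.src, FPath.ofVertex y.src) ∈ R
  tgt : ∀ x y, (x, y) ∈ R → (FPath.ofVertex x.tgt, FPath.ofVertex y.tgt) ∈ R

/-- Multiplicativity of a relation morphism. -/
def RelMult {E F : DGraph} (R : GraphRel E F) : Prop :=
  ∀ (x x' : FPath E) (y y' : FPath F) (hx : x.tgt = x'.src) (hy : y.tgt = y'.src),
    (x, y) ∈ R → (x', y') ∈ R → (x.comp x' hx, y.comp y' hy) ∈ R

/-- Decomposability of a relation morphism. -/
def RelDecomp {E F : DGraph} (R : GraphRel E F) : Prop :=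
  ∀ (y y' : FPath F) (h : y.tgt = y'.src) (xb : FPath E),
    (xb, y.comp y' h) ∈ R →
    ∃ (x x' : FPath E) (hx : x.tgt = x'.src),
      (x, y) ∈ R ∧ (x', y') ∈ R ∧ x.comp x' hx = xb

/-- Properness: all relation preimages are finite. -/
def RelProper {E F : DGraph} (R : GraphRel E F) : Prop :=
  ∀ y : FPath F, {x | (x, y) ∈ R}.Finite

/-- Vertex disjointness: distinct vertices have disjoint relation preimages. -/
def RelVertexDisjoint {E F : DGraph} (R : GraphRel E F) : Prop :=
  ∀ v v' : F.V, v ≠ v' → ∀ u : FPath E,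
    (u, FPath.ofVertex v) ∈ R → (u, FPath.ofVertex v') ∈ R → False

/-- Target injectivity: the target map restricted to the preimage of each edge is injective. -/
def RelTargetInj {E F : DGraph} (R : GraphRel E F) : Prop :=
  ∀ (f : F.E) (x x' : FPath E), (x, FPath.ofEdge f) ∈ R → (x', FPath.ofEdge f) ∈ R →
    x.tgt = x'.tgt → x = x'

/-- Target surjectivity: the target map `R⁻¹(f) → R⁻¹(t f)` is surjective for each edge. -/
def RelTargetSurj {E F : DGraph} (R : GraphRel E F) : Prop :=
  ∀ (f : F.E) (u : E.V), (FPath.ofVertex u, FPath.ofVertex (F.t f)) ∈ R →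
    ∃ x : FPath E, (x, FPath.ofEdge f) ∈ R ∧ x.tgt = u

/-- Monotonicity of a relation morphism. -/
def RelMonotone {E F : DGraph} (R : GraphRel E F) : Prop :=
  ∀ (x x' : FPath E) (f f' : F.E), (x, FPath.ofEdge f) ∈ R → (x', FPath.ofEdge f') ∈ R →
    x.le x' → x = x' ∧ f = f'

/-- Regularity of a relation morphism. -/
def RelRegular {E F : DGraph} (R : GraphRel E F) : Prop :=
  ∀ v : F.V, F.IsRegularV v → ∀ u : E.V, (FPath.ofVertex u, FPath.ofVertex v) ∈ R →
    ∀ x : FPath E, x.src = u →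
      ∃ (x' : FPath E) (f : F.E), (x', FPath.ofEdge f) ∈ R ∧ F.s f = v ∧ x.comparable x'

/-- A path homomorphism: maps vertices to vertices, commutes with sources and
targets, and is multiplicative with respect to concatenation. -/
def IsPathHom {F E : DGraph} (θ : FPath F → FPath E) : Prop :=
  (∀ x : FPath F, x.IsVertex → (θ x).IsVertex) ∧
  (∀ x : FPath F, θ (FPath.ofVertex x.src) = FPath.ofVertex (θ x).src) ∧
  (∀ x : FPath F, θ (FPath.ofVertex x.tgt) = FPath.ofVertex (θ x).tgt) ∧
  (∀ (x x' : FPath F) (h : x.tgt = x'.src) (h' : (θ x).tgt = (θ x').src),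
    θ (x.comp x' h) = (θ x).comp (θ x') h')

/-- A graph homomorphism is a length-preserving path homomorphism. -/
def IsGraphHom {E F : DGraph} (φ : FPath E → FPath F) : Prop :=
  IsPathHom φ ∧ ∀ x : FPath E, (φ x).edges.length = x.edges.length

/-- Properness of a graph homomorphism: finite fibers over vertices and edges. -/
def GHProper {E F : DGraph} (φ : FPath E → FPath F) : Prop :=
  ∀ y : FPath F, y.edges.length ≤ 1 → {x | φ x = y}.Finite

/-- Target injectivity of a graph homomorphism. -/
def GHTargetInj {E F : DGraph} (φ : FPath E → FPath F) : Prop :=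
  ∀ (f : F.E) (x x' : FPath E), φ x = FPath.ofEdge f → φ x' = FPath.ofEdge f →
    x.tgt = x'.tgt → x = x'

/-- Target surjectivity of a graph homomorphism. -/
def GHTargetSurj {E F : DGraph} (φ : FPath E → FPath F) : Prop :=
  ∀ (f : F.E) (u : E.V), φ (FPath.ofVertex u) = FPath.ofVertex (F.t f) →
    ∃ x : FPath E, φ x = FPath.ofEdge f ∧ x.tgt = u

/-- The relation graph `G_R` of a relation morphism `R : E → F`. -/
def relGraph {E F : DGraph} (R : GraphRel E F) (hR : IsRelMorphism E F R) : DGraph where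
  V := {p : E.V × F.V // (FPath.ofVertex p.1, FPath.ofVertex p.2) ∈ R}
  E := {p : FPath E × F.E // (p.1, FPath.ofEdge p.2) ∈ R}
  s := fun e => ⟨(e.1.1.src, F.s e.1.2), hR.src _ _ e.2⟩
  t := fun e => ⟨(e.1.1.tgt, F.t e.1.2), hR.tgt _ _ e.2⟩

theorem FPath.ext' {G : DGraph} {x y : FPath G} (h1 : x.src = y.src)
    (h2 : x.tgt = y.tgt) (h3 : x.edges = y.edges) : x = y := by
  cases x; cases y; simp_all

theorem chain_snoc {G : DGraph} :
    ∀ {l : List G.E} {u w : G.V} {f : G.E},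
      G.chain u (l ++ [f]) w → G.chain u l (G.s f) ∧ G.t f = w
  | [], _, _, _, h => ⟨h.1.symm, h.2⟩
  | e :: es, _, _, _, h => by
    obtain ⟨h1, h2⟩ := h
    obtain ⟨h3, h4⟩ := chain_snoc h2
    exact ⟨⟨h1, h3⟩, h4⟩

/-- Lifting a whole path through a target-surjective relation morphism. -/
theorem lift_tgt {E F : DGraph} {R : GraphRel E F} (hR : IsRelMorphism E F R)
    (hRm : RelMult R) (hRs : RelTargetSurj R) :
    ∀ (l : List F.E) (y : FPath F) (u : E.V), y.edges = l →
      (FPath.ofVertex u, FPath.ofVertex y.tgt) ∈ R →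
      ∃ x : FPath E, (x, y) ∈ R ∧ x.tgt = u := by
  intro l
  induction l using List.reverseRecOn with
  | nil =>
    intro y u hl hu
    have hst : y.src = y.tgt := by
      have := y.chain; rw [hl] at this; exact this
    have hy : y = FPath.ofVertex y.tgt :=
      FPath.ext' hst rfl hl
    exact ⟨FPath.ofVertex u, by rw [hy]; exact hu, rfl⟩
  | append_singleton l f ih =>
    intro y u hl hu
    have hc := y.chain
    rw [hl] at hc
    obtain ⟨hc1, hc2⟩ := chain_snoc hc
    obtain ⟨x2, hx2, hx2t⟩ := hRs f u (by rw [hc2]; exact hu)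
    have hsrc := hR.src _ _ hx2
    set y1 : FPath F := ⟨y.src, F.s f, l, hc1⟩ with hy1
    obtain ⟨x1, hx1, hx1t⟩ := ih y1 x2.src rfl hsrc
    refine ⟨x1.comp x2 hx1t, ?_, ?_⟩
    · have hmem := hRm x1 x2 y1 (FPath.ofEdge f) hx1t rfl hx1 hx2
      have : y1.comp (FPath.ofEdge f) rfl = y :=
        FPath.ext' rfl hc2 hl.symm
      rwa [this] at hmem
    · simpa [FPath.comp] using hx2t

/-- target surjectivity is preserved by composition of PRG morphisms. -/
theorem statement15 {E F G : DGraph} {R : GraphRel E F} {S : GraphRel F G}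
    (hR : IsRelMorphism E F R) (hS : IsRelMorphism F G S)
    (hRm : RelMult R) (hSm : RelMult S) (hRd : RelDecomp R) (hSd : RelDecomp S)
    (hRp : RelProper R) (hSp : RelProper S)
    (hRv : RelVertexDisjoint R) (hSv : RelVertexDisjoint S)
    (hRt : RelTargetInj R) (hSt : RelTargetInj S)
    (hRs : RelTargetSurj R) (hSs : RelTargetSurj S) :
    RelTargetSurj (RelComp R S) := by
  intro g u hu
  obtain ⟨b, hb1, hb2⟩ := hu
  have hbv : b.IsVertex := hS.vertex b _ hb2 rfl
  have hbst : b.src = b.tgt := by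
    have := b.chain; rw [hbv] at this; exact this
  have hb : b = FPath.ofVertex b.tgt := FPath.ext' hbst rfl hbv
  obtain ⟨y, hy, hyt⟩ := hSs g b.tgt (by rw [← hb]; exact hb2)
  obtain ⟨x, hx, hxt⟩ := lift_tgt hR hRm hRs y.edges y u rfl
    (by rw [hyt, ← hb]; exact hb1)
  exact ⟨x, ⟨y, hx, hy⟩, hxt⟩
end

section
/- Let R : E → F and S : F → G be relation morphisms in PRG (multiplicative, decomposable, proper, vertex disjoint, target injective) that are moreover monotone. Then S ∘ R is monotone. -/
section Aux

namespace FPath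

variable {H : DGraph}

theorem ext'_s16 {x y : FPath H} (h1 : x.src = y.src) (h2 : x.tgt = y.tgt)
    (h3 : x.edges = y.edges) : x = y := by
  cases x; cases y; simp_all

theorem tgt_eq_src_of_isVertex {x : FPath H} (h : x.IsVertex) : x.tgt = x.src := by
  have := x.chain
  cases x with
  | mk s t e c => simp [FPath.IsVertex] at h; subst h; exact c.symm

theorem le_trans' {x y z : FPath H} (h1 : x.le y) (h2 : y.le z) : x.le z :=
  ⟨h1.1.trans h2.1, h1.2.trans h2.2⟩

/-- Split a nonempty path into its first edge and the rest. -/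
theorem split (y : FPath H) (f : H.E) (l : List H.E) (h : y.edges = f :: l) :
    ∃ (y₁ : FPath H) (hf : (FPath.ofEdge f).tgt = y₁.src),
      y₁.edges = l ∧ y = (FPath.ofEdge f).comp y₁ hf := by
  have hc := y.chain
  rw [h] at hc
  refine ⟨⟨H.t f, y.tgt, l, hc.2⟩, rfl, rfl, ?_⟩
  have := hc.1
  refine ext'_s16 ?_ rfl ?_ <;> simp_all [FPath.comp, FPath.ofEdge]

theorem le_comp_left (u w : FPath H) (h : u.tgt = w.src) : u.le (u.comp w h) :=
  ⟨rfl, by simp [FPath.comp]⟩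

theorem le_cancel {u w w' : FPath H} {h : u.tgt = w.src} {h' : u.tgt = w'.src}
    (hle : (u.comp w h).le (u.comp w' h')) : w.le w' := by
  obtain ⟨_, h2⟩ := hle
  refine ⟨h.symm.trans h', ?_⟩
  simpa [FPath.comp] using h2

theorem comparable_of_le_le {x y z : FPath H} (hx : x.le z) (hy : y.le z) :
    x.comparable y := by
  rcases hx with ⟨hs, he⟩; rcases hy with ⟨hs', he'⟩
  rcases List.prefix_or_prefix_of_prefix he he' with h | h
  · exact Or.inl ⟨hs.trans hs'.symm, h⟩
  · exact Or.inr ⟨hs'.trans hs.symm, h⟩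

theorem comp_le_comp {u w w' : FPath H} (h : u.tgt = w.src) (h' : u.tgt = w'.src)
    (hle : w.le w') : (u.comp w h).le (u.comp w' h') :=
  ⟨rfl, by simpa [FPath.comp] using hle.2⟩

end FPath

/-- Source vertices of related paths with equal sources are related to the same vertex. -/
theorem src_eq_src {E F : DGraph} {R : GraphRel E F} (hR : IsRelMorphism E F R)
    (hRv : RelVertexDisjoint R) {x x' : FPath E} {y y' : FPath F}
    (hxy : (x, y) ∈ R) (hxy' : (x', y') ∈ R) (hs : x.src = x'.src) :
    y.src = y'.src := by
  by_contra hne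
  have h1 := hR.src _ _ hxy
  have h2 := hR.src _ _ hxy'
  rw [← hs] at h2
  exact hRv _ _ hne _ h1 h2

/-- Key lemma: images of ≼-comparable paths are comparable. -/
theorem comparable_of_le {E F : DGraph} {R : GraphRel E F} (hR : IsRelMorphism E F R)
    (hRd : RelDecomp R) (hRv : RelVertexDisjoint R) (hRmo : RelMonotone R) :
    ∀ (l : List F.E) (y y' : FPath F) (x x' : FPath E), y.edges = l →
      (x, y) ∈ R → (x', y') ∈ R → x.le x' → y.comparable y' := by
  intro l
  induction l with
  | nil =>
    intro y y' x x' hy hxy hxy' hle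
    exact Or.inl ⟨src_eq_src hR hRv hxy hxy' hle.1, by rw [hy]; exact List.nil_prefix⟩
  | cons f l ih =>
    intro y y' x x' hy hxy hxy' hle
    rcases hy' : y'.edges with _ | ⟨f', l'⟩
    · exact Or.inr ⟨src_eq_src hR hRv hxy' hxy hle.1.symm, by rw [hy']; exact List.nil_prefix⟩
    · obtain ⟨y₁, hf, hl1, rfl⟩ := y.split f l hy
      obtain ⟨y₁', hf', hl1', rfl⟩ := y'.split f' l' hy'
      obtain ⟨u, w, hx, hu, hw, rfl⟩ := hRd _ _ hf x hxy
      obtain ⟨u', w', hx', hu', hw', rfl⟩ := hRd _ _ hf' x' hxy'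
      have hux : u.le (u'.comp w' hx') :=
        FPath.le_trans' (FPath.le_comp_left u w hx) hle
      have hcomp := FPath.comparable_of_le_le hux (FPath.le_comp_left u' w' hx')
      have huu : u = u' ∧ f = f' := by
        rcases hcomp with h | h
        · exact hRmo _ _ _ _ hu hu' h
        · obtain ⟨h1, h2⟩ := hRmo _ _ _ _ hu' hu h
          exact ⟨h1.symm, h2.symm⟩
      obtain ⟨rfl, rfl⟩ := huu
      have hww : w.le w' := FPath.le_cancel hle
      rcases ih y₁ y₁' w w' hl1 hw hw' hww with h | h
      · exact Or.inl (FPath.comp_le_comp hf hf' h)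
      · exact Or.inr (FPath.comp_le_comp hf' hf h)

/-- Key lemma: a monotone PRG morphism is injective on fibers along the prefix order. -/
theorem eq_of_le_rel {E F : DGraph} {R : GraphRel E F} (hR : IsRelMorphism E F R)
    (hRd : RelDecomp R) (hRmo : RelMonotone R) :
    ∀ (l : List F.E) (y : FPath F) (x x' : FPath E), y.edges = l →
      (x, y) ∈ R → (x', y) ∈ R → x.le x' → x = x' := by
  intro l
  induction l with
  | nil =>
    intro y x x' hy hxy hxy' hle
    have hv : y.IsVertex := hy
    have h1 : x.IsVertex := hR.vertex _ _ hxy hv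
    have h2 : x'.IsVertex := hR.vertex _ _ hxy' hv
    refine FPath.ext'_s16 hle.1 ?_ (h1.trans h2.symm)
    rw [FPath.tgt_eq_src_of_isVertex h1, FPath.tgt_eq_src_of_isVertex h2, hle.1]
  | cons f l ih =>
    intro y x x' hy hxy hxy' hle
    obtain ⟨y₁, hf, hl1, rfl⟩ := y.split f l hy
    obtain ⟨u, w, hx, hu, hw, rfl⟩ := hRd _ _ hf x hxy
    obtain ⟨u', w', hx', hu', hw', rfl⟩ := hRd _ _ hf x' hxy'
    have hux : u.le (u'.comp w' hx') :=
      FPath.le_trans' (FPath.le_comp_left u w hx) hle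
    have hcomp := FPath.comparable_of_le_le hux (FPath.le_comp_left u' w' hx')
    have huu : u = u' := by
      rcases hcomp with h | h
      · exact (hRmo _ _ _ _ hu hu' h).1
      · exact (hRmo _ _ _ _ hu' hu h).1.symm
    subst huu
    have hww : w = w' := ih y₁ w w' hl1 hw hw' (FPath.le_cancel hle)
    subst hww
    rfl

end Aux

/-- monotonicity is preserved by composition of PRG morphisms. -/
theorem statement16 {E F G : DGraph} {R : GraphRel E F} {S : GraphRel F G}
    (hR : IsRelMorphism E F R) (hS : IsRelMorphism F G S)
    (hRm : RelMult R) (hSm : RelMult S) (hRd : RelDecomp R) (hSd : RelDecomp S)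
    (hRp : RelProper R) (hSp : RelProper S)
    (hRv : RelVertexDisjoint R) (hSv : RelVertexDisjoint S)
    (hRt : RelTargetInj R) (hSt : RelTargetInj S)
    (hRmo : RelMonotone R) (hSmo : RelMonotone S) :
    RelMonotone (RelComp R S) := by
  intro x x' g g' hxg hxg' hle
  obtain ⟨y, hxy, hyg⟩ := hxg
  obtain ⟨y', hxy', hyg'⟩ := hxg'
  have hcomp := comparable_of_le hR hRd hRv hRmo y.edges y y' x x' rfl hxy hxy' hle
  have hyy : y = y' ∧ g = g' := by
    rcases hcomp with h | h
    · exact hSmo _ _ _ _ hyg hyg' h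
    · obtain ⟨h1, h2⟩ := hSmo _ _ _ _ hyg' hyg h
      exact ⟨h1.symm, h2.symm⟩
  obtain ⟨rfl, rfl⟩ := hyy
  exact ⟨eq_of_le_rel hR hRd hRmo y.edges y x x' rfl hxy hxy' hle, rfl⟩
end
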